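/- Let 𝒳, 𝒴 be finite alphabets with |𝒳| ≥ 2 and |𝒴| ≥ 1, W a discrete memoryless channel from 𝒳 to 𝒴, α ∈ (0, 1/2], and n a positive multiple of |𝒳| with n ≥ |𝒳| and n ≥ 2|𝒴|. In the sampling model in which each input symbol is fed n/|𝒳| times into the channel and Ĉⁿ(W) := C(Ŵ) is the capacity of the empirical channel, setting ε := (5/4)·√(N_α)·log(n·θ_α)/√n + N_α/n, it holds that Pr[ |Ĉⁿ(W) − C(W)| ≤ ε ] ≥ 1 − α. -/

import Mathlib

open MeasureTheory ProbabilityTheory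

/-- A probability distribution on a finite alphabet. -/
def IsDist {𝒴 : Type*} [Fintype 𝒴] (P : 𝒴 → ℝ) : Prop :=
  (∀ y, 0 ≤ P y) ∧ ∑ y, P y = 1

/-- The Kullback–Leibler divergence, valued in `EReal`: it equals the real sum
`∑ y, P y * log (P y / Q y)` (with the convention `0 · log (0/q) = 0`) when
`P ≪ Q`, and `+∞` if `P y > 0 = Q y` for some `y`. -/
noncomputable def klE {𝒴 : Type*} [Fintype 𝒴] (P Q : 𝒴 → ℝ) : EReal :=
  if ∀ y, Q y = 0 → P y = 0 then ((∑ y, P y * Real.log (P y / Q y) : ℝ) : EReal) else ⊤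

/-- The capacity of a DMC in the Csiszár–Kemperman dual (minimax) form. -/
noncomputable def capE {𝒳 𝒴 : Type*} [Fintype 𝒳] [Fintype 𝒴] (W : 𝒳 → 𝒴 → ℝ) : EReal :=
  ⨅ (Q : 𝒴 → ℝ) (_ : IsDist Q), ⨆ x : 𝒳, klE (W x) Q

/-- Real-valued capacity (the capacity of a DMC is always finite). -/
noncomputable def capR {𝒳 𝒴 : Type*} [Fintype 𝒳] [Fintype 𝒴] (W : 𝒳 → 𝒴 → ℝ) : ℝ :=
  (capE W).toReal

/-- Empirical channel from `m` output samples per input symbol: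
`Ŵ(y|x) = |{i : Y_{x,i} = y}| / m = (|𝒳|/n)·|{i : Y_{x,i} = y}|` with `n = |𝒳|·m`. -/
noncomputable def empCh {𝒳 𝒴 : Type*} [Fintype 𝒴] [DecidableEq 𝒴] {m : ℕ}
    (Ys : 𝒳 → Fin m → 𝒴) : 𝒳 → 𝒴 → ℝ :=
  fun x y => ((Finset.univ.filter fun i => Ys x i = y).card : ℝ) / m

/-- `N_α := 4|𝒳||𝒴| log(|𝒳|/α)`. -/
noncomputable def Nal (cX cY : ℕ) (α : ℝ) : ℝ := 4 * cX * cY * Real.log (cX / α)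

/-- `θ_α := (|𝒴|·e² / (|𝒳|·log(|𝒳|/α)))^{1/5}`. -/
noncomputable def thetaAl (cX cY : ℕ) (α : ℝ) : ℝ :=
  ((cY : ℝ) * Real.exp 2 / (cX * Real.log (cX / α))) ^ ((1 : ℝ) / 5)

/-!
Capacity is continuous in the rows of the channel. If every row of `V` is `Δ`-close to the
corresponding row of `W` in `ℓ¹`, take an almost optimal output distribution `Q` for `W` and
mix it with the uniform one, `Q' = (1 - Δ) Q + Δ U`. Then `Q'` witnesses
`C(V) ≤ C(W) + 2Δ log (|𝒴| / Δ) + 3Δ`: the entropy change is controlled by the concavity of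
`-x log x`, the change of the cross term by `Q' ≥ Δ / |𝒴|`, and the mixing costs
`-log (1 - Δ) ≤ 2Δ`.

The `ℓ¹` distance between an empirical row and the true row is twice the largest excess mass
of a set `S ⊆ 𝒴`. For each of the `|𝒳| 2^|𝒴|` pairs `(x, S)`, Hoeffding's inequality bounds the
probability of an excess `Δ / 2` by `exp (-m Δ² / 2)`. With `Δ² = N_α / (2n)` the union bound is
at most `α`, and `2Δ log (|𝒴| / Δ) + 3Δ ≤ ε`. If instead `n < 2 N_α`, then `ε ≥ log |𝒴|`, and
this already bounds the difference of any two capacities, since `0 ≤ C ≤ log |𝒴|`.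
-/

open Real Finset

section Divergence

variable {𝒴 : Type*} [Fintype 𝒴]

lemma IsDist.le_one {P : 𝒴 → ℝ} (hP : IsDist P) (y : 𝒴) : P y ≤ 1 :=
  hP.2 ▸ single_le_sum (fun i _ => hP.1 i) (mem_univ y)

lemma isDist_uniform [Nonempty 𝒴] : IsDist fun _ : 𝒴 => (Fintype.card 𝒴 : ℝ)⁻¹ :=
  ⟨fun _ => by positivity, by simp⟩

lemma sub_le_mul_log_div {p q : ℝ} (hp : 0 ≤ p) (hq : 0 ≤ q) (hpq : q = 0 → p = 0) :
    p - q ≤ p * log (p / q) := by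
  rcases hq.eq_or_lt with rfl | hq
  · simp [hpq rfl]
  have := self_sub_one_le_mul_log (div_nonneg hp hq.le)
  calc p - q = q * (p / q - 1) := by field_simp
    _ ≤ q * (p / q * log (p / q)) := by gcongr
    _ = p * log (p / q) := by field_simp

lemma klE_nonneg {P Q : 𝒴 → ℝ} (hP : IsDist P) (hQ : IsDist Q) : 0 ≤ klE P Q := by
  unfold klE
  split_ifs with hPQ
  · have : ∑ y, (P y - Q y) ≤ ∑ y, P y * log (P y / Q y) :=
      sum_le_sum fun y _ => sub_le_mul_log_div (hP.1 y) (hQ.1 y) (hPQ y)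
    rw [sum_sub_distrib, hP.2, hQ.2, sub_self] at this
    exact_mod_cast this
  · exact le_top

lemma klE_uniform_le_log_card [Nonempty 𝒴] {P : 𝒴 → ℝ} (hP : IsDist P) :
    klE P (fun _ => (Fintype.card 𝒴 : ℝ)⁻¹) ≤ (log (Fintype.card 𝒴) : EReal) := by
  have hcard : (0 : ℝ) < Fintype.card 𝒴 := by positivity
  rw [klE, if_pos fun y h => absurd h (by positivity)]
  have : ∑ y, P y * log (P y / (Fintype.card 𝒴 : ℝ)⁻¹) ≤ ∑ y, P y * log (Fintype.card 𝒴) := by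
    refine sum_le_sum fun y _ => ?_
    rcases (hP.1 y).eq_or_lt with hy | hy
    · simp [← hy]
    rw [div_inv_eq_mul]
    gcongr
    exact mul_le_of_le_one_left hcard.le (hP.le_one y)
  rw [← sum_mul, hP.2, one_mul] at this
  exact_mod_cast this

end Divergence

section CapacityBounds

variable {𝒳 𝒴 : Type*} [Fintype 𝒳] [Fintype 𝒴] {W : 𝒳 → 𝒴 → ℝ}

lemma capE_nonneg [Nonempty 𝒳] (hW : ∀ x, IsDist (W x)) : 0 ≤ capE W :=
  le_iInf₂ fun Q hQ =>
    (klE_nonneg (hW (Classical.arbitrary 𝒳)) hQ).trans (le_iSup (fun x => klE (W x) Q) _)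

lemma capE_le_log_card [Nonempty 𝒴] (hW : ∀ x, IsDist (W x)) :
    capE W ≤ (log (Fintype.card 𝒴) : EReal) :=
  (iInf₂_le _ isDist_uniform).trans (iSup_le fun x => klE_uniform_le_log_card (hW x))

lemma coe_capR [Nonempty 𝒳] [Nonempty 𝒴] (hW : ∀ x, IsDist (W x)) : (capR W : EReal) = capE W :=
  EReal.coe_toReal (ne_top_of_le_ne_top (EReal.coe_ne_top _) (capE_le_log_card hW))
    (ne_bot_of_le_ne_bot EReal.zero_ne_bot (capE_nonneg hW))

lemma capR_nonneg [Nonempty 𝒳] [Nonempty 𝒴] (hW : ∀ x, IsDist (W x)) : 0 ≤ capR W :=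
  EReal.coe_nonneg.mp (coe_capR hW ▸ capE_nonneg hW)

lemma capR_le_log_card [Nonempty 𝒳] [Nonempty 𝒴] (hW : ∀ x, IsDist (W x)) :
    capR W ≤ log (Fintype.card 𝒴) :=
  EReal.coe_le_coe_iff.mp (coe_capR hW ▸ capE_le_log_card hW)

lemma abs_capR_sub_capR_le_log_card [Nonempty 𝒳] [Nonempty 𝒴] {V : 𝒳 → 𝒴 → ℝ}
    (hV : ∀ x, IsDist (V x)) (hW : ∀ x, IsDist (W x)) : |capR V - capR W| ≤ log (Fintype.card 𝒴) :=
  abs_sub_le_of_nonneg_of_le (capR_nonneg hV) (capR_le_log_card hV) (capR_nonneg hW)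
    (capR_le_log_card hW)

end CapacityBounds

section EntropyContinuity

lemma negMulLog_le_negMulLog {s t : ℝ} (hs : 0 ≤ s) (hst : s ≤ t) (ht : t ≤ exp (-1)) :
    negMulLog s ≤ negMulLog t := by
  refine monotoneOn_of_deriv_nonneg (convex_Icc 0 (exp (-1))) continuous_negMulLog.continuousOn
    (fun x hx => (differentiableAt_negMulLog_iff.mpr ?_).differentiableWithinAt) (fun x hx => ?_)
    ⟨hs, hst.trans ht⟩ ⟨hs.trans hst, ht⟩ hst
  · rw [interior_Icc] at hx; exact hx.1.ne'
  · rw [interior_Icc] at hx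
    rw [deriv_negMulLog hx.1.ne', sub_nonneg, le_neg, ← log_exp (-1)]
    exact log_le_log hx.1 hx.2.le

lemma mul_log_add_mul_log_le {a c : ℝ} (ha : 0 ≤ a) (hc : 0 ≤ c) :
    a * log a + c * log c ≤ (a + c) * log (a + c) := by
  rcases ha.eq_or_lt with rfl | ha
  · simp
  rcases hc.eq_or_lt with rfl | hc
  · simp
  rw [add_mul]
  gcongr <;> linarith

lemma mul_log_sub_mul_log_le {a b : ℝ} (ha0 : 0 ≤ a) (ha1 : a ≤ 1) (hb : 0 ≤ b) :
    a * log a - b * log b ≤ |a - b| + negMulLog |a - b| := by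
  rcases le_total a b with hab | hba
  · have := mul_log_add_mul_log_le ha0 (sub_nonneg.mpr hab)
    rw [add_sub_cancel, ← sub_nonneg] at this
    rw [abs_sub_comm, abs_of_nonneg (sub_nonneg.mpr hab), negMulLog]
    linarith [sub_nonneg.mpr hab]
  · rw [abs_of_nonneg (sub_nonneg.mpr hba)]
    have hneg := negMulLog_nonneg (sub_nonneg.mpr hba) (by linarith)
    suffices a * log a - b * log b ≤ a - b by linarith
    rcases hb.eq_or_lt with rfl | hb
    · simpa using (mul_log_nonpos ha0 ha1).trans ha0
    have ha := hb.trans_le hba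
    have hgibbs := sub_le_mul_log_div hb.le ha0 fun h => by linarith
    have hlog : (a - b) * log a ≤ 0 :=
      mul_nonpos_of_nonneg_of_nonpos (by linarith) (log_nonpos ha0 ha1)
    rw [log_div hb.ne' ha.ne', mul_sub] at hgibbs
    rw [sub_mul] at hlog
    linarith

variable {𝒴 : Type*} [Fintype 𝒴] [Nonempty 𝒴]

lemma sum_negMulLog_le_card_mul {d : 𝒴 → ℝ} (hd : ∀ y, 0 ≤ d y) :
    ∑ y, negMulLog (d y) ≤ Fintype.card 𝒴 * negMulLog ((∑ y, d y) / Fintype.card 𝒴) := by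
  have hcard : (0 : ℝ) < Fintype.card 𝒴 := by positivity
  have := concaveOn_negMulLog.le_map_sum (t := univ) (w := fun _ => (Fintype.card 𝒴 : ℝ)⁻¹)
    (p := d) (fun _ _ => by positivity) (by simp) (fun y _ => hd y)
  simp only [smul_eq_mul, inv_mul_eq_div, ← sum_div] at this
  rwa [div_le_iff₀' hcard] at this

lemma sum_mul_log_sub_sum_mul_log_le {V W : 𝒴 → ℝ} (hV0 : ∀ y, 0 ≤ V y) (hV1 : ∀ y, V y ≤ 1)
    (hW : ∀ y, 0 ≤ W y) {Δ : ℝ} (hΔ : 0 < Δ) (hΔe : Δ / Fintype.card 𝒴 ≤ exp (-1))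
    (hVW : ∑ y, |V y - W y| ≤ Δ) :
    ∑ y, V y * log (V y) - ∑ y, W y * log (W y) ≤ Δ + Δ * log (Fintype.card 𝒴 / Δ) := by
  have hcard : (0 : ℝ) < Fintype.card 𝒴 := by positivity
  calc ∑ y, V y * log (V y) - ∑ y, W y * log (W y)
      ≤ ∑ y, |V y - W y| + ∑ y, negMulLog |V y - W y| := by
        rw [← sum_sub_distrib, ← sum_add_distrib]
        exact sum_le_sum fun y _ => mul_log_sub_mul_log_le (hV0 y) (hV1 y) (hW y)
    _ ≤ Δ + Fintype.card 𝒴 * negMulLog (Δ / Fintype.card 𝒴) := by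
        gcongr
        refine (sum_negMulLog_le_card_mul fun y => abs_nonneg _).trans ?_
        gcongr
        exact negMulLog_le_negMulLog (by positivity) (by gcongr) hΔe
    _ = Δ + Δ * log (Fintype.card 𝒴 / Δ) := by
        rw [negMulLog, log_div hΔ.ne' hcard.ne', log_div hcard.ne' hΔ.ne']
        field_simp
        ring

end EntropyContinuity

section CapacityContinuity

lemma neg_log_one_sub_le {Δ : ℝ} (hΔ0 : 0 ≤ Δ) (hΔ : Δ ≤ 1 / 2) : -log (1 - Δ) ≤ 2 * Δ := by
  have h := one_sub_inv_le_log_of_pos (show 0 < 1 - Δ by linarith)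
  have : (1 - Δ)⁻¹ ≤ 1 + 2 * Δ := by
    rw [inv_le_iff_one_le_mul₀ (by linarith)]; nlinarith
  linarith

lemma mul_log_div_eq {p q : ℝ} (hpq : q = 0 → p = 0) : p * log (p / q) = p * log p - p * log q := by
  rcases eq_or_ne p 0 with rfl | hp
  · simp
  rw [log_div hp fun hq => hp (hpq hq), mul_sub]

variable {𝒴 : Type*} [Fintype 𝒴]

noncomputable def mixUniform (Δ : ℝ) (Q : 𝒴 → ℝ) : 𝒴 → ℝ :=
  fun y => (1 - Δ) * Q y + Δ / Fintype.card 𝒴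

variable {Δ : ℝ} {Q : 𝒴 → ℝ}

lemma div_card_le_mixUniform (hQ : IsDist Q) (hΔ : Δ ≤ 1) (y : 𝒴) :
    Δ / Fintype.card 𝒴 ≤ mixUniform Δ Q y :=
  le_add_of_nonneg_left (mul_nonneg (by linarith) (hQ.1 y))

lemma mul_le_mixUniform (hΔ : 0 ≤ Δ) (y : 𝒴) : (1 - Δ) * Q y ≤ mixUniform Δ Q y :=
  le_add_of_nonneg_right (by positivity)

lemma sum_mul_log_le_sum_mul_log_mixUniform {P : 𝒴 → ℝ} (hP : IsDist P) (hQ : IsDist Q)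
    (hPQ : ∀ y, Q y = 0 → P y = 0) (hΔ0 : 0 ≤ Δ) (hΔ1 : Δ < 1) :
    ∑ y, P y * log (Q y) ≤ ∑ y, P y * log (mixUniform Δ Q y) - log (1 - Δ) := by
  have h : ∀ y, P y * log (Q y) + P y * log (1 - Δ) ≤ P y * log (mixUniform Δ Q y) := by
    intro y
    rcases (hP.1 y).eq_or_lt with hy | hy
    · simp [← hy]
    have hQy : 0 < Q y := (hQ.1 y).lt_of_ne fun h => hy.ne' (hPQ y h.symm)
    rw [← mul_add, ← log_mul hQy.ne' (by linarith), mul_comm (Q y)]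
    exact mul_le_mul_of_nonneg_left
      (log_le_log (mul_pos (by linarith) hQy) (mul_le_mixUniform hΔ0 y)) hy.le
  have := sum_le_sum fun y (_ : y ∈ univ) => h y
  rw [sum_add_distrib, ← sum_mul, hP.2, one_mul] at this
  linarith

variable [Nonempty 𝒴]

lemma mixUniform_pos (hQ : IsDist Q) (hΔ0 : 0 < Δ) (hΔ1 : Δ ≤ 1) (y : 𝒴) :
    0 < mixUniform Δ Q y :=
  (by positivity : 0 < Δ / Fintype.card 𝒴).trans_le (div_card_le_mixUniform hQ hΔ1 y)

lemma isDist_mixUniform (hQ : IsDist Q) (hΔ0 : 0 ≤ Δ) (hΔ1 : Δ ≤ 1) :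
    IsDist (mixUniform Δ Q) :=
  ⟨fun y => (by positivity : 0 ≤ Δ / Fintype.card 𝒴).trans (div_card_le_mixUniform hQ hΔ1 y),
    by simp [mixUniform, sum_add_distrib, ← mul_sum, hQ.2, mul_div_cancel₀]⟩

lemma sum_mul_log_mixUniform_sub_le {P V : 𝒴 → ℝ} (hQ : IsDist Q) (hΔ0 : 0 < Δ) (hΔ1 : Δ ≤ 1)
    (hVP : ∑ y, |V y - P y| ≤ Δ) :
    ∑ y, P y * log (mixUniform Δ Q y) - ∑ y, V y * log (mixUniform Δ Q y)
      ≤ Δ * log (Fintype.card 𝒴 / Δ) := by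
  have hcard : (1 : ℝ) ≤ Fintype.card 𝒴 := Nat.one_le_cast.mpr Fintype.card_pos
  have hQ' := isDist_mixUniform hQ hΔ0.le hΔ1
  have hQ'pos := mixUniform_pos hQ hΔ0 hΔ1
  have hlog : ∀ y, 0 ≤ -log (mixUniform Δ Q y) ∧
      -log (mixUniform Δ Q y) ≤ log (Fintype.card 𝒴 / Δ) := fun y =>
    ⟨neg_nonneg.mpr (log_nonpos (hQ'pos y).le (hQ'.le_one y)), by
      rw [← log_inv, ← inv_div]
      exact log_le_log (inv_pos.mpr (hQ'pos y))
        (inv_anti₀ (by positivity) (div_card_le_mixUniform hQ hΔ1 y))⟩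
  calc ∑ y, P y * log (mixUniform Δ Q y) - ∑ y, V y * log (mixUniform Δ Q y)
      = ∑ y, (V y - P y) * -log (mixUniform Δ Q y) := by
        rw [← sum_sub_distrib]; congr! 1; ring
    _ ≤ ∑ y, |V y - P y| * log (Fintype.card 𝒴 / Δ) :=
        sum_le_sum fun y _ => mul_le_mul (le_abs_self _) (hlog y).2 (hlog y).1 (abs_nonneg _)
    _ ≤ Δ * log (Fintype.card 𝒴 / Δ) := by
        rw [← sum_mul]
        exact mul_le_mul_of_nonneg_right hVP (log_nonneg ((one_le_div hΔ0).mpr (by linarith)))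

lemma sum_mul_log_div_mixUniform_le {P V : 𝒴 → ℝ} (hP : IsDist P) (hV : IsDist V)
    (hQ : IsDist Q) (hPQ : ∀ y, Q y = 0 → P y = 0) (hΔ0 : 0 < Δ) (hΔ : Δ ≤ 1 / 2)
    (hcard : 2 ≤ Fintype.card 𝒴) (hVP : ∑ y, |V y - P y| ≤ Δ) :
    ∑ y, V y * log (V y / mixUniform Δ Q y)
      ≤ ∑ y, P y * log (P y / Q y) + (2 * Δ * log (Fintype.card 𝒴 / Δ) + 3 * Δ) := by
  have hcard' : (2 : ℝ) ≤ Fintype.card 𝒴 := by exact_mod_cast hcard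
  have hentropy : ∑ y, V y * log (V y) - ∑ y, P y * log (P y)
      ≤ Δ + Δ * log (Fintype.card 𝒴 / Δ) := by
    refine sum_mul_log_sub_sum_mul_log_le hV.1 hV.le_one hP.1 hΔ0 ?_ hVP
    calc Δ / Fintype.card 𝒴 ≤ (1 / 2) / 2 := by gcongr
      _ ≤ exp (-1) := by
        rw [exp_neg, le_inv_comm₀ (by norm_num) (exp_pos 1)]
        linarith [exp_one_lt_d9]
  have hsplitV : ∀ y, V y * log (V y / mixUniform Δ Q y)
      = V y * log (V y) - V y * log (mixUniform Δ Q y) :=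
    fun y => mul_log_div_eq fun h => absurd h (mixUniform_pos hQ hΔ0 (by linarith) y).ne'
  have hsplitP : ∀ y, P y * log (P y / Q y) = P y * log (P y) - P y * log (Q y) :=
    fun y => mul_log_div_eq (hPQ y)
  simp only [hsplitV, hsplitP, sum_sub_distrib]
  linarith [neg_log_one_sub_le hΔ0.le hΔ, sum_mul_log_mixUniform_sub_le hQ hΔ0 (by linarith) hVP,
    sum_mul_log_le_sum_mul_log_mixUniform hP hQ hPQ hΔ0.le (by linarith : Δ < 1)]

variable {𝒳 : Type*} [Fintype 𝒳] [Nonempty 𝒳]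

lemma exists_isDist_forall_sum_mul_log_div_lt {W : 𝒳 → 𝒴 → ℝ} (hW : ∀ x, IsDist (W x))
    {η : ℝ} (hη : 0 < η) : ∃ Q, IsDist Q ∧
      ∀ x, (∀ y, Q y = 0 → W x y = 0) ∧ ∑ y, W x y * log (W x y / Q y) < capR W + η := by
  have : capE W < (capR W + η : ℝ) := by
    rw [← coe_capR hW]; exact_mod_cast lt_add_of_pos_right _ hη
  obtain ⟨Q, hQ⟩ := iInf_lt_iff.mp this
  obtain ⟨hQ, hlt⟩ := iInf_lt_iff.mp hQ
  refine ⟨Q, hQ, fun x => ?_⟩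
  have hx := (le_iSup (fun x => klE (W x) Q) x).trans_lt hlt
  unfold klE at hx
  split_ifs at hx with hWQ
  · exact ⟨hWQ, by exact_mod_cast hx⟩
  · simp at hx

lemma capR_le_of_forall_sum_mul_log_div_le {V : 𝒳 → 𝒴 → ℝ} (hV : ∀ x, IsDist (V x))
    (hQ : IsDist Q) (hQpos : ∀ y, 0 < Q y) {c : ℝ}
    (h : ∀ x, ∑ y, V x y * log (V x y / Q y) ≤ c) : capR V ≤ c := by
  have : capE V ≤ c := (iInf₂_le Q hQ).trans <| iSup_le fun x => by
    rw [klE, if_pos fun y hy => absurd hy (hQpos y).ne']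
    exact_mod_cast h x
  exact EReal.coe_le_coe_iff.mp (coe_capR hV ▸ this)

theorem capR_le_capR_add {V W : 𝒳 → 𝒴 → ℝ} (hV : ∀ x, IsDist (V x)) (hW : ∀ x, IsDist (W x))
    (hcard : 2 ≤ Fintype.card 𝒴) (hΔ0 : 0 < Δ) (hΔ : Δ ≤ 1 / 2)
    (hVW : ∀ x, ∑ y, |V x y - W x y| ≤ Δ) :
    capR V ≤ capR W + (2 * Δ * log (Fintype.card 𝒴 / Δ) + 3 * Δ) := by
  refine le_of_forall_pos_le_add fun η hη => ?_
  obtain ⟨Q, hQ, hWQ⟩ := exists_isDist_forall_sum_mul_log_div_lt hW hη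
  have := capR_le_of_forall_sum_mul_log_div_le hV (isDist_mixUniform hQ hΔ0.le (by linarith))
    (mixUniform_pos hQ hΔ0 (by linarith)) fun x =>
      (sum_mul_log_div_mixUniform_le (hW x) (hV x) hQ (hWQ x).1 hΔ0 hΔ hcard (hVW x)).trans
        (add_le_add_left (hWQ x).2.le _)
  linarith

end CapacityContinuity

lemma sum_abs_eq_two_mul_sum_filter_pos {𝒴 : Type*} [Fintype 𝒴] {f : 𝒴 → ℝ} (hf : ∑ y, f y = 0) :
    ∑ y, |f y| = 2 * ∑ y ∈ univ.filter (fun y => 0 < f y), f y := by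
  have : ∑ y, |f y| = ∑ y, (|f y| + f y) := by rw [sum_add_distrib, hf, add_zero]
  rw [this, sum_filter, mul_sum]
  refine sum_congr rfl fun y _ => ?_
  split_ifs with h
  · rw [abs_of_pos h]; ring
  · rw [abs_of_nonpos (not_lt.mp h)]; ring

section EmpiricalChannel

variable {𝒳 𝒴 : Type*} [Fintype 𝒴] [DecidableEq 𝒴]

lemma sum_empCh_eq {m : ℕ} (Ys : 𝒳 → Fin m → 𝒴) (x : 𝒳) (S : Finset 𝒴) :
    ∑ y ∈ S, empCh Ys x y = (∑ i, if Ys x i ∈ S then (1 : ℝ) else 0) / m := by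
  simp only [empCh, ← sum_div, card_filter, Nat.cast_sum, Nat.cast_ite, Nat.cast_one,
    Nat.cast_zero]
  rw [sum_comm]
  simp [sum_ite_eq]

lemma empCh_isDist {m : ℕ} (hm : 0 < m) (Ys : 𝒳 → Fin m → 𝒴) (x : 𝒳) : IsDist (empCh Ys x) :=
  ⟨fun y => by unfold empCh; positivity, by rw [sum_empCh_eq Ys x univ]; simp [hm.ne']⟩

end EmpiricalChannel

section Concentration

variable {𝒳 𝒴 Ω : Type*} [MeasurableSpace 𝒴] [MeasurableSingletonClass 𝒴] [MeasurableSpace Ω]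
  {μ : Measure Ω}

lemma measure_preimage_finset_eq {Z : Ω → 𝒴} (hZ : Measurable Z) {P : 𝒴 → ℝ} (hP : ∀ y, 0 ≤ P y)
    (hlaw : ∀ y, μ (Z ⁻¹' {y}) = ENNReal.ofReal (P y)) (S : Finset 𝒴) :
    μ (Z ⁻¹' S) = ENNReal.ofReal (∑ y ∈ S, P y) := by
  rw [← Set.biUnion_preimage_singleton, Finset.set_biUnion_coe, measure_biUnion_finset,
    ENNReal.ofReal_sum_of_nonneg fun y _ => hP y]
  · exact sum_congr rfl fun y _ => hlaw y
  · exact fun y _ z _ hyz => Set.disjoint_singleton.mpr hyz |>.preimage Z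
  · exact fun y _ => hZ (measurableSet_singleton y)

variable [Fintype 𝒴] [DecidableEq 𝒴] [IsProbabilityMeasure μ] {m : ℕ}
  {Y : 𝒳 → Fin m → Ω → 𝒴} {W : 𝒳 → 𝒴 → ℝ}

lemma measure_le_sum_empCh_sub_le (hm : 0 < m) (hmeas : ∀ x i, Measurable (Y x i))
    (hindep : iIndepFun (fun (q : 𝒳 × Fin m) ω => Y q.1 q.2 ω) μ) (hW : ∀ x, IsDist (W x))
    (hlaw : ∀ x i y, μ (Y x i ⁻¹' {y}) = ENNReal.ofReal (W x y))
    (x : 𝒳) (S : Finset 𝒴) {t : ℝ} (ht : 0 ≤ t) :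
    μ {ω | t ≤ ∑ y ∈ S, (empCh (fun x i => Y x i ω) x y - W x y)}
      ≤ ENNReal.ofReal (exp (-2 * m * t ^ 2)) := by
  set p := ∑ y ∈ S, W x y
  set Z : Fin m → Ω → ℝ := fun i => (Y x i ⁻¹' S).indicator 1
  have hZmean : ∀ i, μ[Z i] = p := fun i => by
    rw [integral_indicator_one ((hmeas x i) S.measurableSet), measureReal_def,
      measure_preimage_finset_eq (hmeas x i) (hW x).1 (hlaw x i),
      ENNReal.toReal_ofReal (sum_nonneg fun y _ => (hW x).1 y)]
  have hsubG : ∀ i ∈ (univ : Finset (Fin m)),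
      HasSubgaussianMGF (fun ω => Z i ω - p) ((‖(1 : ℝ) - 0‖₊ / 2) ^ 2) μ := by
    intro i _
    have := hasSubgaussianMGF_of_mem_Icc (μ := μ) (X := Z i) (a := 0) (b := 1)
      (measurable_one.indicator ((hmeas x i) S.measurableSet)).aemeasurable
      (ae_of_all _ fun ω => by simp only [Z, Set.indicator]; split_ifs <;> simp)
    simpa only [hZmean] using this
  have hindepZ : iIndepFun (fun i ω => Z i ω - p) μ :=
    (hindep.precomp (Prod.mk_right_injective x)).comp
      (fun _ v => (S : Set 𝒴).indicator 1 v - p) fun _ => by fun_prop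
  have hevent : {ω | t ≤ ∑ y ∈ S, (empCh (fun x i => Y x i ω) x y - W x y)}
      = {ω | m * t ≤ ∑ i, (Z i ω - p)} := by
    ext ω
    simp only [Set.mem_ofPred_eq, sum_sub_distrib, sum_empCh_eq, Z, Set.indicator,
      Set.mem_preimage, Finset.mem_coe, Pi.one_apply, sum_const, card_univ, Fintype.card_fin,
      nsmul_eq_mul]
    rw [le_sub_iff_add_le, le_div_iff₀ (by exact_mod_cast hm), le_sub_iff_add_le, add_mul,
      mul_comm t, mul_comm p]
  rw [hevent, ← ofReal_measureReal]
  refine ENNReal.ofReal_le_ofReal ((HasSubgaussianMGF.measure_sum_ge_le_of_iIndepFun hindepZ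
    hsubG (by positivity)).trans_eq ?_)
  congr 1
  norm_num
  field_simp
  ring

variable [Fintype 𝒳]

lemma measure_exists_le_sum_empCh_sub_le (hm : 0 < m) (hmeas : ∀ x i, Measurable (Y x i))
    (hindep : iIndepFun (fun (q : 𝒳 × Fin m) ω => Y q.1 q.2 ω) μ) (hW : ∀ x, IsDist (W x))
    (hlaw : ∀ x i y, μ (Y x i ⁻¹' {y}) = ENNReal.ofReal (W x y)) {t : ℝ} (ht : 0 ≤ t) :
    μ {ω | ∃ x, ∃ S : Finset 𝒴, t ≤ ∑ y ∈ S, (empCh (fun x i => Y x i ω) x y - W x y)}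
      ≤ ENNReal.ofReal (Fintype.card 𝒳 * 2 ^ Fintype.card 𝒴 * exp (-2 * m * t ^ 2)) := by
  simp only [Set.ofPred_exists]
  calc μ (⋃ x, ⋃ S : Finset 𝒴, {ω | t ≤ ∑ y ∈ S, (empCh (fun x i => Y x i ω) x y - W x y)})
      ≤ ∑ x, ∑ S : Finset 𝒴,
          μ {ω | t ≤ ∑ y ∈ S, (empCh (fun x i => Y x i ω) x y - W x y)} :=
        (measure_iUnion_fintype_le _ _).trans (sum_le_sum fun x _ => measure_iUnion_fintype_le _ _)
    _ ≤ ∑ x : 𝒳, ∑ S : Finset 𝒴, ENNReal.ofReal (exp (-2 * m * t ^ 2)) := by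
        gcongr with x _ S _
        exact measure_le_sum_empCh_sub_le hm hmeas hindep hW hlaw x S ht
    _ = ENNReal.ofReal (Fintype.card 𝒳 * 2 ^ Fintype.card 𝒴 * exp (-2 * m * t ^ 2)) := by
        simp [Fintype.card_finset, ENNReal.ofReal_mul, mul_assoc]

theorem measure_compl_abs_capR_empCh_sub_le [Nonempty 𝒳] [Nonempty 𝒴] (hm : 0 < m)
    (hmeas : ∀ x i, Measurable (Y x i))
    (hindep : iIndepFun (fun (q : 𝒳 × Fin m) ω => Y q.1 q.2 ω) μ) (hW : ∀ x, IsDist (W x))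
    (hlaw : ∀ x i y, μ (Y x i ⁻¹' {y}) = ENNReal.ofReal (W x y))
    (hcard : 2 ≤ Fintype.card 𝒴) {Δ : ℝ} (hΔ0 : 0 < Δ) (hΔ : Δ ≤ 1 / 2) :
    μ {ω | |capR (empCh fun x i => Y x i ω) - capR W|
        ≤ 2 * Δ * log (Fintype.card 𝒴 / Δ) + 3 * Δ}ᶜ
      ≤ ENNReal.ofReal (Fintype.card 𝒳 * 2 ^ Fintype.card 𝒴 * exp (-m * Δ ^ 2 / 2)) := by
  have hexp : -2 * m * (Δ / 2) ^ 2 = -m * Δ ^ 2 / 2 := by ring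
  refine (measure_mono fun ω hω => ?_).trans (hexp ▸ measure_exists_le_sum_empCh_sub_le hm hmeas
    hindep hW hlaw (t := Δ / 2) (by positivity))
  have hV := empCh_isDist hm fun x i => Y x i ω
  by_contra hgood
  simp only [Set.mem_ofPred_eq, not_exists, not_le] at hgood
  apply hω
  have hL1 : ∀ x, ∑ y, |empCh (fun x i => Y x i ω) x y - W x y| ≤ Δ := fun x => by
    rw [sum_abs_eq_two_mul_sum_filter_pos (by rw [sum_sub_distrib, (hV x).2, (hW x).2, sub_self])]
    linarith [hgood x (univ.filter fun y => 0 < empCh (fun x i => Y x i ω) x y - W x y)]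
  rw [Set.mem_ofPred_eq, abs_sub_le_iff]
  constructor
  · linarith [capR_le_capR_add hV hW hcard hΔ0 hΔ hL1]
  · linarith [capR_le_capR_add hW hV hcard hΔ0 hΔ fun x => by simpa only [abs_sub_comm] using hL1 x]

end Concentration

lemma ofReal_one_sub_le_of_measure_compl_le {Ω : Type*} [MeasurableSpace Ω] {μ : Measure Ω}
    [IsProbabilityMeasure μ] {s : Set Ω} {a : ℝ} (ha : 0 ≤ a) (h : μ sᶜ ≤ ENNReal.ofReal a) :
    ENNReal.ofReal (1 - a) ≤ μ s := by
  rw [ENNReal.ofReal_sub _ ha, ENNReal.ofReal_one, tsub_le_iff_right]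
  calc 1 = μ (s ∪ sᶜ) := by rw [Set.union_compl_self, measure_univ]
    _ ≤ μ s + μ sᶜ := measure_union_le s sᶜ
    _ ≤ μ s + ENNReal.ofReal a := by gcongr

section Arithmetic

noncomputable def capRadius (cX cY : ℕ) (α n : ℝ) : ℝ :=
  5 / 4 * √(Nal cX cY α) * log (n * thetaAl cX cY α) / √n + Nal cX cY α / n

variable {cX cY : ℕ} {α n : ℝ}

lemma two_mul_log_two_le_log_div (hX : 2 ≤ cX) (hα0 : 0 < α) (hα1 : α ≤ 1 / 2) :
    2 * log 2 ≤ log (cX / α) := by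
  have hX' : (2 : ℝ) ≤ cX := by exact_mod_cast hX
  calc 2 * log 2 = log (2 ^ 2) := by rw [log_pow]; norm_num
    _ ≤ log (cX / α) := log_le_log (by norm_num) (by rw [le_div_iff₀ hα0]; nlinarith)

lemma Nal_pos (hX : 0 < cX) (hY : 0 < cY) (hL : 0 < log (cX / α)) : 0 < Nal cX cY α :=
  mul_pos (mul_pos (mul_pos four_pos (Nat.cast_pos.mpr hX)) (Nat.cast_pos.mpr hY)) hL

lemma sqrt_Nal_div_mem_Ioc (hX : 2 ≤ cX) (hY : 0 < cY) (hα0 : 0 < α) (hα1 : α ≤ 1 / 2)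
    (hn : 2 * Nal cX cY α ≤ n) : √(Nal cX cY α / (2 * n)) ∈ Set.Ioc 0 (1 / 2) := by
  have hN := Nal_pos (cX := cX) (cY := cY) (α := α) (by omega) hY
    (by linarith [two_mul_log_two_le_log_div hX hα0 hα1, log_two_gt_d9])
  have hn0 : 0 < n := by linarith
  exact ⟨sqrt_pos.mpr (by positivity),
    sqrt_le_iff.mpr ⟨by norm_num, by rw [div_le_iff₀ (by positivity)]; linarith⟩⟩

lemma log_Nal_div (hX : 0 < cX) (hY : 0 < cY) (hL : 0 < log (cX / α)) (hn : 0 < n) :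
    log (Nal cX cY α / n) = 2 * log 2 + log cX + log cY + log (log (cX / α)) - log n := by
  have : (4 : ℝ) = 2 ^ 2 := by norm_num
  rw [Nal, log_div (by positivity) hn.ne', log_mul (by positivity) hL.ne',
    log_mul (by positivity) (by positivity), log_mul (by positivity) (by positivity), this,
    log_pow]
  push_cast
  ring

lemma log_mul_thetaAl (hX : 0 < cX) (hY : 0 < cY) (hL : 0 < log (cX / α)) (hn : 0 < n) :
    log (n * thetaAl cX cY α) = log n + (log cY + 2 - log cX - log (log (cX / α))) / 5 := by
  rw [thetaAl, log_mul hn.ne' (by positivity), log_rpow (by positivity),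
    log_div (by positivity) (by positivity), log_mul (by positivity) (exp_pos 2).ne',
    log_mul (by positivity) hL.ne', log_exp]
  ring

lemma capRadius_eq (hn : 0 ≤ n) : capRadius cX cY α n
    = 5 / 4 * √(Nal cX cY α / n) * log (n * thetaAl cX cY α) + Nal cX cY α / n := by
  rw [capRadius, sqrt_div' _ hn]
  ring

lemma mul_log_card_div_add_le_capRadius (hX : 2 ≤ cX) (hY : 0 < cY) (hα0 : 0 < α)
    (hα1 : α ≤ 1 / 2) (hn : 2 * Nal cX cY α ≤ n) {Δ : ℝ} (hΔ : Δ = √(Nal cX cY α / (2 * n))) :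
    2 * Δ * log (cY / Δ) + 3 * Δ ≤ capRadius cX cY α n := by
  have hL := two_mul_log_two_le_log_div hX hα0 hα1
  have hlog2 := log_two_gt_d9
  have hL0 : 0 < log (cX / α) := by linarith
  have hN := Nal_pos (by omega) hY hL0
  have hn0 : 0 < n := by linarith
  have hΔ0 : 0 < Δ := (hΔ ▸ sqrt_Nal_div_mem_Ioc hX hY hα0 hα1 hn).1
  have hu := log_Nal_div (by omega) hY hL0 hn0
  have hθ := log_mul_thetaAl (by omega) hY hL0 hn0
  have hlogΔ : log Δ = (log (Nal cX cY α / n) - log 2) / 2 := by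
    rw [hΔ, log_sqrt (by positivity), div_mul_eq_div_div_swap, log_div (by positivity) two_ne_zero]
  have hsqrt2 : (1.41 : ℝ) ≤ √2 := by rw [le_sqrt (by norm_num) zero_le_two]; norm_num
  have hb : log 2 ≤ log cX := log_le_log two_pos (by exact_mod_cast hX)
  have hc : 0 ≤ log cY := log_nonneg (by exact_mod_cast hY)
  have hl : 0 ≤ log (log (cX / α)) := log_nonneg (by linarith)
  have ha : log (Nal cX cY α / n) ≤ -log 2 := by
    rw [← log_inv]
    exact log_le_log (by positivity) (by rw [div_le_iff₀ hn0]; linarith)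
  have key : 2 * (log cY - log Δ) + 3
      ≤ 5 / 4 * √2 * (log n + (log cY + 2 - log cX - log (log (cX / α))) / 5) := by
    have hΦ : 0 ≤ 5 * log n + log cY + 2 - log cX - log (log (cX / α)) := by linarith
    rw [hlogΔ]
    linarith [mul_le_mul_of_nonneg_right hsqrt2 hΦ]
  have hsqrt : √(Nal cX cY α / n) = √2 * Δ := by
    rw [hΔ, ← sqrt_mul zero_le_two]
    congr 1; field_simp
  rw [capRadius_eq hn0.le, hsqrt, log_div (by positivity) hΔ0.ne', hθ]
  nlinarith [mul_le_mul_of_nonneg_left key hΔ0.le, div_pos hN hn0]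

lemma capRadius_nonneg (hX : 2 ≤ cX) (hY : 0 < cY) (hα0 : 0 < α) (hα1 : α ≤ 1 / 2)
    (hn : 2 * Nal cX cY α ≤ n) : 0 ≤ capRadius cX cY α n := by
  obtain ⟨hΔ0, hΔ1⟩ := sqrt_Nal_div_mem_Ioc hX hY hα0 hα1 hn
  refine le_trans ?_ (mul_log_card_div_add_le_capRadius hX hY hα0 hα1 hn rfl)
  have := log_nonneg ((one_le_div hΔ0).mpr ((hΔ1.trans (by norm_num)).trans
    (Nat.one_le_cast.mpr hY)))
  positivity

lemma log_card_le_capRadius (hX : 2 ≤ cX) (hY : 0 < cY) (hα0 : 0 < α) (hα1 : α ≤ 1 / 2)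
    (hnY : 2 * cY ≤ n) (hn : n < 2 * Nal cX cY α) : log cY ≤ capRadius cX cY α n := by
  have hL := two_mul_log_two_le_log_div hX hα0 hα1
  have hlog2 := log_two_gt_d9
  have hL0 : 0 < log (cX / α) := by linarith
  have hN := Nal_pos (by omega) hY hL0
  have hY' : (1 : ℝ) ≤ cY := by exact_mod_cast hY
  have hn0 : 0 < n := by linarith
  have hu := log_Nal_div (by omega) hY hL0 hn0
  have hθ := log_mul_thetaAl (by omega) hY hL0 hn0
  rw [capRadius_eq hn0.le, hθ]
  set v := √(Nal cX cY α / n)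
  have hv2 : v ^ 2 = Nal cX cY α / n := sq_sqrt (by positivity)
  have hv0 : 0 < v := sqrt_pos.mpr (by positivity)
  have hv : (0.7 : ℝ) ≤ v := by
    have : 1 / 2 < v ^ 2 := by rw [hv2, lt_div_iff₀ hn0]; linarith
    nlinarith
  have hlogv : log (Nal cX cY α / n) = 2 * log v := by rw [← hv2, log_pow]; push_cast; ring
  have haY : log 2 + log cY ≤ log n := by
    rw [← log_mul two_ne_zero (by positivity)]; exact log_le_log (by positivity) hnY
  have hc : 0 ≤ log cY := log_nonneg hY'
  have hexpand : 5 / 4 * v * (log n + (log cY + 2 - log cX - log (log (cX / α))) / 5)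
      = v * log n + v / 2 * (log cY + 1 + log 2 - log v) := by
    linear_combination (-(v / 4)) * (hu.symm.trans hlogv)
  rw [hexpand, ← hv2]
  nlinarith [mul_le_mul_of_nonneg_left haY hv0.le,
    mul_le_mul_of_nonneg_left (log_le_sub_one_of_pos hv0) (by linarith : (0 : ℝ) ≤ v / 2),
    mul_nonneg hc (by linarith : (0 : ℝ) ≤ v - 0.7)]

lemma card_mul_two_pow_mul_exp_le {m : ℕ} (hX : 2 ≤ cX) (hY : 2 ≤ cY) (hα0 : 0 < α)
    (hα1 : α ≤ 1 / 2) (hm : 0 < m) (hnm : n = cX * m) {Δ : ℝ}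
    (hΔ : Δ = √(Nal cX cY α / (2 * n))) :
    cX * 2 ^ cY * exp (-m * Δ ^ 2 / 2) ≤ α := by
  have hL := two_mul_log_two_le_log_div hX hα0 hα1
  have hlog2 := log_two_gt_d9
  have hX0 : (0 : ℝ) < cX := by positivity
  have hY' : (2 : ℝ) ≤ cY := by exact_mod_cast hY
  have hm' : (0 : ℝ) < m := by exact_mod_cast hm
  have hN := Nal_pos (cY := cY) (by omega) (by omega) (by linarith : 0 < log (cX / α))
  have hexp : -m * Δ ^ 2 / 2 = -(cY * log (cX / α)) := by
    rw [hΔ, sq_sqrt (div_pos hN (by rw [hnm]; positivity)).le, hnm, Nal]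
    field_simp
    ring
  have hpow : (2 : ℝ) ^ cY = exp (cY * log 2) := by rw [exp_nat_mul, exp_log two_pos]
  calc cX * 2 ^ cY * exp (-m * Δ ^ 2 / 2) = cX * exp (cY * log 2 - cY * log (cX / α)) := by
        rw [hexp, hpow, mul_assoc, ← exp_add, sub_eq_add_neg]
    _ ≤ cX * exp (-log (cX / α)) := by
        gcongr
        nlinarith [mul_nonneg (by linarith : (0 : ℝ) ≤ cY - 2)
          (by linarith : 0 ≤ log (cX / α) - 2 * log 2)]
    _ = α := by rw [exp_neg, exp_log (by positivity)]; field_simp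

end Arithmetic

theorem stmt_9_general {𝒳 𝒴 : Type*} [Fintype 𝒳] [Nonempty 𝒳] [Fintype 𝒴] [Nonempty 𝒴]
    [DecidableEq 𝒴] [MeasurableSpace 𝒴] [MeasurableSingletonClass 𝒴]
    {Ω : Type*} [MeasurableSpace Ω] (μ : Measure Ω) [IsProbabilityMeasure μ]
    (h𝒳 : 2 ≤ Fintype.card 𝒳)
    (W : 𝒳 → 𝒴 → ℝ) (hW : ∀ x, IsDist (W x))
    (α : ℝ) (hα0 : 0 < α) (hα1 : α ≤ 1 / 2)
    (m n : ℕ) (hm : 0 < m) (hnm : n = Fintype.card 𝒳 * m)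
    (hn2 : 2 * Fintype.card 𝒴 ≤ n)
    (Y : 𝒳 → Fin m → Ω → 𝒴) (hmeas : ∀ x i, Measurable (Y x i))
    (hindep : iIndepFun (m := fun _ : 𝒳 × Fin m => ‹MeasurableSpace 𝒴›)
      (fun p ω => Y p.1 p.2 ω) μ)
    (hlaw : ∀ x i y, μ (Y x i ⁻¹' {y}) = ENNReal.ofReal (W x y))
    (ε : ℝ)
    (hε : ε = 5 / 4 * Real.sqrt (Nal (Fintype.card 𝒳) (Fintype.card 𝒴) α) *
        Real.log (n * thetaAl (Fintype.card 𝒳) (Fintype.card 𝒴) α) / Real.sqrt n +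
        Nal (Fintype.card 𝒳) (Fintype.card 𝒴) α / n) :
    ENNReal.ofReal (1 - α) ≤
      μ {ω | |capR (empCh fun x i => Y x i ω) - capR W| ≤ ε} := by
  have hY : 0 < Fintype.card 𝒴 := Fintype.card_pos
  change ε = capRadius (Fintype.card 𝒳) (Fintype.card 𝒴) α n at hε
  refine ofReal_one_sub_le_of_measure_compl_le hα0.le ?_
  rcases le_or_gt (log (Fintype.card 𝒴)) ε with hlog | hlog
  · have : {ω | |capR (empCh fun x i => Y x i ω) - capR W| ≤ ε}ᶜ = ∅ :=
      Set.compl_empty_iff.mpr <| Set.eq_univ_of_forall fun ω =>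
        (abs_capR_sub_capR_le_log_card (empCh_isDist hm _) hW).trans hlog
    simp [this]
  have hsmall : 2 * Nal (Fintype.card 𝒳) (Fintype.card 𝒴) α ≤ n := not_lt.mp fun h =>
    hlog.not_ge (hε ▸ log_card_le_capRadius h𝒳 hY hα0 hα1 (by exact_mod_cast hn2) h)
  have hcard : 2 ≤ Fintype.card 𝒴 := by
    by_contra h
    rw [show Fintype.card 𝒴 = 1 by omega, Nat.cast_one, log_one] at hlog
    exact hlog.not_ge (hε ▸ capRadius_nonneg h𝒳 hY hα0 hα1 hsmall)
  set Δ := √(Nal (Fintype.card 𝒳) (Fintype.card 𝒴) α / (2 * n)) with hΔ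
  obtain ⟨hΔ0, hΔ1⟩ := sqrt_Nal_div_mem_Ioc h𝒳 hY hα0 hα1 hsmall
  calc μ {ω | |capR (empCh fun x i => Y x i ω) - capR W| ≤ ε}ᶜ
      ≤ μ {ω | |capR (empCh fun x i => Y x i ω) - capR W|
          ≤ 2 * Δ * log (Fintype.card 𝒴 / Δ) + 3 * Δ}ᶜ :=
        measure_mono (Set.compl_subset_compl.mpr fun ω hω =>
          hω.trans (hε ▸ mul_log_card_div_add_le_capRadius h𝒳 hY hα0 hα1 hsmall hΔ))
    _ ≤ ENNReal.ofReal (Fintype.card 𝒳 * 2 ^ Fintype.card 𝒴 * exp (-m * Δ ^ 2 / 2)) :=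
        measure_compl_abs_capR_empCh_sub_le hm hmeas hindep hW hlaw hcard hΔ0 hΔ1
    _ ≤ ENNReal.ofReal α := ENNReal.ofReal_le_ofReal
        (card_mul_two_pow_mul_exp_le h𝒳 hcard hα0 hα1 hm (by rw [hnm]; push_cast; rfl) hΔ)

/-- confidence bound for the capacity estimator. With
`ε = (5/4)·√N_α·log(n·θ_α)/√n + N_α/n`, the empirical capacity deviates from
the true capacity by at most `ε` with probability at least `1 − α`. -/
theorem stmt_9 {𝒳 𝒴 : Type*} [Fintype 𝒳] [Nonempty 𝒳] [Fintype 𝒴] [Nonempty 𝒴]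
    [DecidableEq 𝒴] [MeasurableSpace 𝒴] [MeasurableSingletonClass 𝒴]
    {Ω : Type*} [MeasurableSpace Ω] (μ : Measure Ω) [IsProbabilityMeasure μ]
    (h𝒳 : 2 ≤ Fintype.card 𝒳)
    (W : 𝒳 → 𝒴 → ℝ) (hW : ∀ x, IsDist (W x))
    (α : ℝ) (hα0 : 0 < α) (hα1 : α ≤ 1 / 2)
    (m n : ℕ) (hm : 0 < m) (hnm : n = Fintype.card 𝒳 * m)
    (hn1 : Fintype.card 𝒳 ≤ n) (hn2 : 2 * Fintype.card 𝒴 ≤ n)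
    (Y : 𝒳 → Fin m → Ω → 𝒴) (hmeas : ∀ x i, Measurable (Y x i))
    (hindep : iIndepFun (m := fun _ : 𝒳 × Fin m => ‹MeasurableSpace 𝒴›)
      (fun p ω => Y p.1 p.2 ω) μ)
    (hlaw : ∀ x i y, μ (Y x i ⁻¹' {y}) = ENNReal.ofReal (W x y))
    (ε : ℝ)
    (hε : ε = 5 / 4 * Real.sqrt (Nal (Fintype.card 𝒳) (Fintype.card 𝒴) α) *
        Real.log (n * thetaAl (Fintype.card 𝒳) (Fintype.card 𝒴) α) / Real.sqrt n +
        Nal (Fintype.card 𝒳) (Fintype.card 𝒴) α / n) :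
    ENNReal.ofReal (1 - α) ≤
      μ {ω | |capR (empCh fun x i => Y x i ω) - capR W| ≤ ε} :=
  stmt_9_general μ h𝒳 W hW α hα0 hα1 m n hm hnm hn2 Y hmeas hindep hlaw ε hε
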